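/- Suppose that for every y ∈ Ĵ(U_ad) + ℝ^k_≥ the set (y − ℝ^k_≥) ∩ (Ĵ(U_ad) + ℝ^k_≥) is compact. Then the Pareto front is externally stable: for every y ∈ Ĵ(U_ad) there exists a Pareto optimal point ū ∈ U_ad with Ĵ(ū) ≤ y; equivalently, Ĵ(U_ad) ⊆ Ĵ(U_opt) + ℝ^k_≥. -/

import Mathlib

/-!
Minimizing the continuous, strictly monotone function `v ↦ ∑ i, v i` over the compact section
`Iic (J u) ∩ upperClosure (J '' Uad)` produces a minimal element of that section. Anything of
`J '' Uad` below it lies in the section again, so this minimal element is itself a value `J ubar`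
and is minimal in all of `J '' Uad`, i.e. `ubar` is Pareto optimal.
-/

open Set

lemma IsCompact.exists_minimal_of_strictMono {α β : Type*} [TopologicalSpace α] [Preorder α]
    [TopologicalSpace β] [LinearOrder β] [ClosedIicTopology β] {f : α → β} (hf : StrictMono f)
    (hfc : Continuous f) {s : Set α} (hs : IsCompact s) (hne : s.Nonempty) :
    ∃ m, Minimal (· ∈ s) m := by
  obtain ⟨m, hm, hmin⟩ := hs.exists_isMinOn hne hfc.continuousOn
  refine ⟨m, hm, fun x hx hxm => ?_⟩
  by_contra hmx
  exact (hf (lt_of_le_not_ge hxm hmx)).not_ge (hmin hx)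

lemma Minimal.of_inter_Iic_upperClosure {α : Type*} [PartialOrder α] {s : Set α} {y m : α}
    (hm : Minimal (· ∈ Iic y ∩ upperClosure s) m) : Minimal (· ∈ s) m ∧ m ≤ y := by
  obtain ⟨hmy, a, ha, ham⟩ := hm.prop
  have below_mem {b : α} (hb : b ∈ s) (hbm : b ≤ m) : b ∈ Iic y ∩ upperClosure s :=
    ⟨hbm.trans hmy, subset_upperClosure hb⟩
  obtain rfl : a = m := hm.eq_of_le (below_mem ha ham) ham
  exact ⟨⟨ha, fun b hb hba => hm.2 (below_mem hb hba) hba⟩, hmy⟩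

lemma setOf_exists_eq_add_nonneg_eq_upperClosure {ι α : Type*} [AddCommGroup α] [PartialOrder α]
    [IsOrderedAddMonoid α] (s : Set ι) (f : ι → α) :
    {v | ∃ i ∈ s, ∃ d, 0 ≤ d ∧ v = f i + d} = upperClosure (f '' s) := by
  ext v
  simp only [mem_ofPred_eq, SetLike.mem_coe, mem_upperClosure, mem_image, exists_exists_and_eq_and]
  constructor
  · rintro ⟨i, hi, d, hd, rfl⟩
    exact ⟨i, hi, le_add_of_nonneg_right hd⟩
  · rintro ⟨i, hi, hiv⟩
    exact ⟨i, hi, v - f i, sub_nonneg.2 hiv, (add_sub_cancel _ _).symm⟩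

theorem pareto_front_externally_stable_of_compact_sections_general
    {U : Type*}
    {k : ℕ} (Uad : Set U)
    (J : U → (Fin k → ℝ))
    (hcpt : ∀ y ∈ {v : Fin k → ℝ | ∃ u ∈ Uad, ∃ d : Fin k → ℝ, 0 ≤ d ∧ v = J u + d},
      IsCompact ({v : Fin k → ℝ | v ≤ y} ∩
        {v : Fin k → ℝ | ∃ u ∈ Uad, ∃ d : Fin k → ℝ, 0 ≤ d ∧ v = J u + d})) :
    ∀ u ∈ Uad, ∃ ubar ∈ Uad,
      (∀ ut ∈ Uad, ¬ (J ut ≤ J ubar ∧ J ut ≠ J ubar)) ∧ J ubar ≤ J u := by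
  intro u hu
  simp only [setOf_exists_eq_add_nonneg_eq_upperClosure, Iic_def] at hcpt
  have hJu : J u ∈ upperClosure (J '' Uad) := subset_upperClosure (mem_image_of_mem J hu)
  obtain ⟨m, hm⟩ := (hcpt _ hJu).exists_minimal_of_strictMono Fintype.sum_strictMono
    (by fun_prop) ⟨J u, mem_Iic.2 le_rfl, hJu⟩
  obtain ⟨hmin, hmu⟩ := hm.of_inter_Iic_upperClosure
  obtain ⟨ubar, hubar, rfl⟩ := hmin.prop
  exact ⟨ubar, hubar, fun ut hut ⟨hle, hne⟩ => hne (hmin.eq_of_le (mem_image_of_mem J hut) hle),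
    hmu⟩

/-- **External stability of the Pareto front.**
Let `U` be a real Hilbert space, `Uad ⊆ U` nonempty, `k ≥ 2` and
`J : U → ℝ^k`.  If for every `y ∈ J(Uad) + ℝ^k_≥` the set
`(y − ℝ^k_≥) ∩ (J(Uad) + ℝ^k_≥)` is compact, then the Pareto front is externally
stable: for every `y ∈ J(Uad)` there is a Pareto optimal `ubar ∈ Uad` with
`J ubar ≤ y`; equivalently `J(Uad) ⊆ J(U_opt) + ℝ^k_≥`. -/
theorem pareto_front_externally_stable_of_compact_sections
    {U : Type*} [NormedAddCommGroup U] [InnerProductSpace ℝ U] [CompleteSpace U]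
    {k : ℕ} (hk : 2 ≤ k) (Uad : Set U) (hUad : Uad.Nonempty)
    (J : U → (Fin k → ℝ))
    (hcpt : ∀ y ∈ {v : Fin k → ℝ | ∃ u ∈ Uad, ∃ d : Fin k → ℝ, 0 ≤ d ∧ v = J u + d},
      IsCompact ({v : Fin k → ℝ | v ≤ y} ∩
        {v : Fin k → ℝ | ∃ u ∈ Uad, ∃ d : Fin k → ℝ, 0 ≤ d ∧ v = J u + d})) :
    ∀ u ∈ Uad, ∃ ubar ∈ Uad,
      (∀ ut ∈ Uad, ¬ (J ut ≤ J ubar ∧ J ut ≠ J ubar)) ∧ J ubar ≤ J u :=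
  pareto_front_externally_stable_of_compact_sections_general Uad J hcpt
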